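/- arXiv:1502.06407 — 3 statements merged into one kernel-verified Lean document; each statement's English description precedes it below -/
import Mathlib

section
/- Under the coefficient identities for f ∈ M^α_σ(β), the second Hankel determinant satisfies a₂a₄ − a₃² = −(1−β)⁴c₁⁴/(3(1+α)³(1+3α)) + (1−β)³c₁²(c₂−d₂)/(8(1+α)²(1+2α)) + (1−β)²c₁(c₃−d₃)/(6(1+α)(1+3α)) − (1−β)²(c₂−d₂)²/(16(1+2α)²). -/
set_option maxHeartbeats 1000000 in
/-- Under the coefficient identities for `f ∈ M^α_σ(β)`, the second Hankel determinant
satisfies the stated formula. -/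
theorem hankel_formula
    (α β : ℝ) (hα : 0 ≤ α ∧ α ≤ 1) (hβ : 0 ≤ β ∧ β < 1)
    (a₂ a₃ a₄ c₁ c₂ c₃ d₁ d₂ d₃ : ℂ)
    (h1 : (1 + (α : ℂ)) * a₂ = (1 - (β : ℂ)) * c₁)
    (h2 : 2 * (1 + 2 * (α : ℂ)) * a₃ - (1 + 3 * (α : ℂ)) * a₂ ^ 2 = (1 - (β : ℂ)) * c₂)
    (h3 : 3 * (1 + 3 * (α : ℂ)) * a₄ - 3 * (1 + 5 * (α : ℂ)) * a₂ * a₃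
        + (1 + 7 * (α : ℂ)) * a₂ ^ 3 = (1 - (β : ℂ)) * c₃)
    (h4 : -(1 + (α : ℂ)) * a₂ = (1 - (β : ℂ)) * d₁)
    (h5 : (3 + 5 * (α : ℂ)) * a₂ ^ 2 - (2 + 4 * (α : ℂ)) * a₃ = (1 - (β : ℂ)) * d₂)
    (h6 : (12 + 30 * (α : ℂ)) * a₂ * a₃ - (10 + 22 * (α : ℂ)) * a₂ ^ 3
        - (3 + 9 * (α : ℂ)) * a₄ = (1 - (β : ℂ)) * d₃) :
    a₂ * a₄ - a₃ ^ 2 =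
      -(1 - (β : ℂ)) ^ 4 * c₁ ^ 4 / (3 * (1 + (α : ℂ)) ^ 3 * (1 + 3 * (α : ℂ)))
      + (1 - (β : ℂ)) ^ 3 * c₁ ^ 2 * (c₂ - d₂)
          / (8 * (1 + (α : ℂ)) ^ 2 * (1 + 2 * (α : ℂ)))
      + (1 - (β : ℂ)) ^ 2 * c₁ * (c₃ - d₃)
          / (6 * (1 + (α : ℂ)) * (1 + 3 * (α : ℂ)))
      - (1 - (β : ℂ)) ^ 2 * (c₂ - d₂) ^ 2 / (16 * (1 + 2 * (α : ℂ)) ^ 2) := by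
  obtain ⟨hα0, hα1⟩ := hα
  set x : ℂ := 1 + (α : ℂ) with hx
  set y : ℂ := 1 + 2 * (α : ℂ) with hy
  set z : ℂ := 1 + 3 * (α : ℂ) with hz
  set A : ℂ := 1 - (β : ℂ) with hA
  have e1 : x ≠ 0 := by
    have : ((1 + α : ℝ) : ℂ) ≠ 0 := by
      simp only [Complex.ofReal_ne_zero]; positivity
    simpa [hx] using this
  have e2 : y ≠ 0 := by
    have : ((1 + 2 * α : ℝ) : ℂ) ≠ 0 := by
      simp only [Complex.ofReal_ne_zero]; positivity
    simpa [hy] using this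
  have e3 : z ≠ 0 := by
    have : ((1 + 3 * α : ℝ) : ℂ) ≠ 0 := by
      simp only [Complex.ofReal_ne_zero]; positivity
    simpa [hz] using this
  have hD : 48 * x ^ 3 * y ^ 2 * z ≠ 0 := by
    simp [e1, e2, e3]
  have key : a₂ * a₄ - a₃ ^ 2 =
      (-16 * y ^ 2 * A ^ 4 * c₁ ^ 4 + 6 * x * y * z * A ^ 3 * c₁ ^ 2 * (c₂ - d₂)
        + 8 * x ^ 2 * y ^ 2 * A ^ 2 * c₁ * (c₃ - d₃)
        - 3 * x ^ 3 * z * A ^ 2 * (c₂ - d₂) ^ 2) / (48 * x ^ 3 * y ^ 2 * z) := by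
    rw [eq_div_iff hD]
    linear_combination
      (8 * x ^ 3 * y ^ 2 * a₂) * (h3 - h6)
      + (18 * x ^ 3 * y * z * a₂ ^ 2 - 12 * x ^ 3 * y * z * a₃
         - 3 * x ^ 3 * z * A * (c₂ - d₂)) * (h2 - h5)
      + (-16 * y ^ 2 * ((x * a₂) ^ 3 + (x * a₂) ^ 2 * A * c₁ + x * a₂ * A ^ 2 * c₁ ^ 2
            + A ^ 3 * c₁ ^ 3)
         + 6 * x * y * z * A * (c₂ - d₂) * (x * a₂ + A * c₁)
         + 8 * x ^ 2 * y ^ 2 * A * (c₃ - d₃)) * h1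
  rw [key, div_eq_iff hD, div_add_div _ _ (by simp [e1, e3]) (by simp [e1, e2]),
    div_add_div _ _ (by simp [e1, e2, e3]) (by simp [e1, e3]),
    div_sub_div _ _ (by simp [e1, e2, e3]) (by simp [e2]),
    div_mul_eq_mul_div, eq_div_iff (by simp [e1, e2, e3])]
  ring
end

section
/- Let α ∈ [0,1], β ∈ [0,1) with A := [16(1−β)²(1+2α) − 6(1−β)(1+α)(1+3α)](1+2α) + (1+α)²[3(1+α)(1+3α) − 8(1+2α)²] < 0, and set c₀² = −12(1+α)[(1−β)(1+2α)(1+3α) + 2(1+α)(1+2α)² − (1+α)²(1+3α)]/A. If β > 1 − (1+α)[3(1+3α) + √(9(1+3α)² + 128(1+2α)²)]/(32(1+2α)) then c₀ < 2, and the maximum of K(c) = (1−β)²(Ac⁴ + Bc² + C)/(48(1+α)³(1+2α)²(1+3α)) on [0,2] is attained at c = c₀, with value (1−β)²/((1+α)(1+3α)) · [(1−β)²(1+3α)(13+7α) − 12(1−β)(1+α)(1+2α)(1+3α) − 4(1+α)²(9α²+8α+2)]/A. -/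
set_option maxHeartbeats 1000000



private lemma aux_q (α x s : ℝ) (hα0 : 0 ≤ α) (hx : 0 < x) (hs0 : 0 ≤ s)
    (hssq : s ^ 2 = 9 * (1 + 3 * α) ^ 2 + 128 * (1 + 2 * α) ^ 2)
    (h : x * (32 * (1 + 2 * α)) < (1 + α) * (3 * (1 + 3 * α) + s)) :
    16 * (1 + 2 * α) * x ^ 2 - 3 * (1 + α) * (1 + 3 * α) * x
      - 2 * (1 + α) ^ 2 * (1 + 2 * α) < 0 := by
  have ha : (0:ℝ) < 1 + α := by linarith
  have hU : (0:ℝ) < 1 + 2 * α := by linarith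
  have hsge : 3 * (1 + 3 * α) ≤ s := by
    nlinarith [sq_nonneg (s - 3 * (1 + 3 * α))]
  nlinarith [mul_pos
    (show 0 < (1 + α) * (3 * (1 + 3 * α) + s) - 32 * (1 + 2 * α) * x by nlinarith)
    (show 0 < (1 + α) * (s - 3 * (1 + 3 * α)) + 32 * (1 + 2 * α) * x by
      nlinarith [mul_pos hU hx, mul_nonneg ha.le (sub_nonneg.2 hsge)]),
    hU, mul_pos hU hx]

/-- Case `A < 0` with `β` large: the interior critical point `c₀` lies in `[0,2)` and
`K` attains its maximum there, with the stated value. -/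
theorem K_max_case2 (α β : ℝ) (hα : 0 ≤ α ∧ α ≤ 1) (hβ : 0 ≤ β ∧ β < 1)
    (A B C : ℝ)
    (hA : A = (16 * (1 - β) ^ 2 * (1 + 2 * α)
        - 6 * (1 - β) * (1 + α) * (1 + 3 * α)) * (1 + 2 * α)
        + (1 + α) ^ 2 * (3 * (1 + α) * (1 + 3 * α) - 8 * (1 + 2 * α) ^ 2))
    (hB : B = 24 * (1 + α) * ((1 - β) * (1 + 2 * α) * (1 + 3 * α)
        + 2 * (1 + α) * (1 + 2 * α) ^ 2 - (1 + α) ^ 2 * (1 + 3 * α)))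
    (hC : C = 48 * (1 + α) ^ 3 * (1 + 3 * α))
    (hA0 : A < 0)
    (K : ℝ → ℝ)
    (hK : ∀ c : ℝ, K c = (1 - β) ^ 2 * (A * c ^ 4 + B * c ^ 2 + C)
        / (48 * (1 + α) ^ 3 * (1 + 2 * α) ^ 2 * (1 + 3 * α)))
    (c₀ : ℝ)
    (hc₀ : c₀ = Real.sqrt (-12 * (1 + α) * ((1 - β) * (1 + 2 * α) * (1 + 3 * α)
        + 2 * (1 + α) * (1 + 2 * α) ^ 2 - (1 + α) ^ 2 * (1 + 3 * α)) / A))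
    (hβ2 : 1 - (1 + α) * (3 * (1 + 3 * α)
        + Real.sqrt (9 * (1 + 3 * α) ^ 2 + 128 * (1 + 2 * α) ^ 2))
          / (32 * (1 + 2 * α)) < β) :
    c₀ < 2 ∧
    (∀ c ∈ Set.Icc (0 : ℝ) 2, K c ≤ K c₀) ∧
    K c₀ = (1 - β) ^ 2 / ((1 + α) * (1 + 3 * α)) *
      (((1 - β) ^ 2 * (1 + 3 * α) * (13 + 7 * α)
          - 12 * (1 - β) * (1 + α) * (1 + 2 * α) * (1 + 3 * α)
          - 4 * (1 + α) ^ 2 * (9 * α ^ 2 + 8 * α + 2)) / A) := by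
  obtain ⟨hα0, hα1⟩ := hα
  obtain ⟨hβ0, hβ1⟩ := hβ
  have ha : (0:ℝ) < 1 + α := by linarith
  have hU : (0:ℝ) < 1 + 2 * α := by linarith
  have hT : (0:ℝ) < 1 + 3 * α := by linarith
  have hx : (0:ℝ) < 1 - β := by linarith
  have hAne : A ≠ 0 := ne_of_lt hA0
  have hBpos : 0 < B := by
    rw [hB]; nlinarith [mul_pos (mul_pos hx hU) hT, mul_pos ha hU, sq_nonneg α,
      mul_pos ha (mul_pos ha hT)]
  set v : ℝ := -12 * (1 + α) * ((1 - β) * (1 + 2 * α) * (1 + 3 * α)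
        + 2 * (1 + α) * (1 + 2 * α) ^ 2 - (1 + α) ^ 2 * (1 + 3 * α)) / A with hv
  have hveq : v = -B / (2 * A) := by
    rw [hv, hB]; field_simp; ring
  have hvpos : 0 < v := by
    rw [hveq]
    exact div_pos_of_neg_of_neg (by linarith) (by linarith)
  have hc0sq : c₀ ^ 2 = v := by
    rw [hc₀]; exact Real.sq_sqrt hvpos.le
  have hc0nn : 0 ≤ c₀ := hc₀ ▸ Real.sqrt_nonneg _
  have hrel : 2 * A * c₀ ^ 2 + B = 0 := by
    rw [hc0sq, hveq]; field_simp; ring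
  -- Part 1 : c₀ < 2
  have hc0lt : c₀ < 2 := by
    set s : ℝ := Real.sqrt (9 * (1 + 3 * α) ^ 2 + 128 * (1 + 2 * α) ^ 2) with hs
    have hs0 : 0 ≤ s := Real.sqrt_nonneg _
    have hssq : s ^ 2 = 9 * (1 + 3 * α) ^ 2 + 128 * (1 + 2 * α) ^ 2 := by
      rw [hs]; exact Real.sq_sqrt (by positivity)
    have h32 : (0:ℝ) < 32 * (1 + 2 * α) := by linarith
    have h' : 1 - β < (1 + α) * (3 * (1 + 3 * α) + s) / (32 * (1 + 2 * α)) := by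
      linarith
    have hβ2' : (1 - β) * (32 * (1 + 2 * α)) < (1 + α) * (3 * (1 + 3 * α) + s) :=
      (lt_div_iff₀ h32).mp h'
    have hq : 16 * (1 + 2 * α) * (1 - β) ^ 2 - 3 * (1 + α) * (1 + 3 * α) * (1 - β)
        - 2 * (1 + α) ^ 2 * (1 + 2 * α) < 0 :=
      aux_q α (1 - β) s hα0 hx hs0 hssq hβ2'
    have h8AB : 8 * A + B < 0 := by
      have hid : 8 * A + B = 8 * (1 + 2 * α) * (16 * (1 + 2 * α) * (1 - β) ^ 2
          - 3 * (1 + α) * (1 + 3 * α) * (1 - β) - 2 * (1 + α) ^ 2 * (1 + 2 * α)) := by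
        rw [hA, hB]; ring
      rw [hid]
      exact mul_neg_of_pos_of_neg (by linarith) hq
    have hvrel : v * (2 * A) = -B := by
      rw [hveq]; field_simp
    have hc0sq4 : c₀ ^ 2 < 4 := by
      rw [hc0sq]
      nlinarith [hvrel, h8AB, hA0]
    have h22 : (2:ℝ) ^ 2 = 4 := by norm_num
    exact lt_of_pow_lt_pow_left₀ 2 (by norm_num) (h22 ▸ hc0sq4)
  refine ⟨hc0lt, ?_, ?_⟩
  · -- maximum
    intro c _
    rw [hK c, hK c₀]
    have hD : (0:ℝ) < 48 * (1 + α) ^ 3 * (1 + 2 * α) ^ 2 * (1 + 3 * α) := by positivity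
    refine div_le_div_of_nonneg_right ?_ hD.le
    have keyeq : (1 - β) ^ 2 * (A * c₀ ^ 4 + B * c₀ ^ 2 + C)
        - (1 - β) ^ 2 * (A * c ^ 4 + B * c ^ 2 + C)
        = (1 - β) ^ 2 * (-A) * (c ^ 2 - c₀ ^ 2) ^ 2 := by
      linear_combination ((1 - β) ^ 2 * (c₀ ^ 2 - c ^ 2)) * hrel
    have hnn : 0 ≤ (1 - β) ^ 2 * (-A) * (c ^ 2 - c₀ ^ 2) ^ 2 :=
      mul_nonneg (mul_nonneg (sq_nonneg _) (by linarith)) (sq_nonneg _)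
    linarith [keyeq, hnn]
  · -- value
    rw [hK c₀]
    have key : A * c₀ ^ 4 + B * c₀ ^ 2 + C = (4 * A * C - B ^ 2) / (4 * A) := by
      have h4 : c₀ ^ 4 = (c₀ ^ 2) ^ 2 := by ring
      rw [h4, hc0sq, hveq]
      field_simp
      ring
    rw [key]
    have hpoly : 4 * A * C - B ^ 2 = 192 * (1 + α) ^ 2 * (1 + 2 * α) ^ 2 *
        ((1 - β) ^ 2 * (1 + 3 * α) * (13 + 7 * α)
          - 12 * (1 - β) * (1 + α) * (1 + 2 * α) * (1 + 3 * α)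
          - 4 * (1 + α) ^ 2 * (9 * α ^ 2 + 8 * α + 2)) := by
      rw [hA, hB, hC]; ring
    have haT : ((1 + α) * (1 + 3 * α)) ≠ 0 := by positivity
    have hD : (48 : ℝ) * (1 + α) ^ 3 * (1 + 2 * α) ^ 2 * (1 + 3 * α) ≠ 0 := by positivity
    rw [hpoly]
    field_simp
    ring
end

section
/- Let f(z) = z + Σ_{n≥2} aₙzⁿ be a bi-starlike function of order β, i.e. f ∈ M^0_σ(β), with 0 ≤ β ≤ 1 − (3 + √89)/16. Then |a₂a₄ − a₃²| ≤ 4(1−β)²[4(1−β)² + 1]/3. -/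
/-!
Write `p z = z f'(z) / f(z)`, extended across `0` by `p 0 = 1`; starlikeness of order `β` says
`β ≤ Re p` on the disc. Comparing coefficients in `z f' = p f` expresses `a₂, a₃, a₄` through the
Taylor coefficients `c₁, c₂, c₃` of `p` and gives `a₂a₄ - a₃² = c₁c₃/3 - c₂²/4 - c₁⁴/12`.
For Carathéodory's lemma `‖cₙ‖ ≤ 2(1 - β)` (`n ≥ 1`), average `p(z) z⁻ⁿ` over `|z| = ρ < 1`: by
Cauchy's formula this is `cₙ`, and since `conj p` and constants have no `n`-th Fourier mode, `p` may
be replaced by the weight `2 (Re p - β) ≥ 0`, whose average is `2 (1 - β)` by the mean value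
property. So `‖cₙ‖ ρⁿ ≤ 2(1 - β)`; let `ρ → 1`. With `t = 2(1 - β) ≥ 1` the triangle inequality
bounds the Hankel determinant by `t²/3 + t²/4 + t⁴/12 ≤ t²(t² + 1)/3`.
-/

open Complex Metric Real Filter Topology Finset FormalMultilinearSeries ComplexConjugate

section CircleAverage

theorem norm_circleAverage_le {E : Type*} [NormedAddCommGroup E] [NormedSpace ℝ E]
    (f : ℂ → E) (c : ℂ) (R : ℝ) :
    ‖circleAverage f c R‖ ≤ circleAverage (fun z ↦ ‖f z‖) c R := by
  rw [circleAverage, circleAverage, norm_smul, smul_eq_mul, Real.norm_of_nonneg (by positivity)]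
  gcongr
  exact intervalIntegral.norm_integral_le_integral_norm two_pi_pos.le

variable {E : Type*} [NormedAddCommGroup E] [NormedSpace ℂ E] [CompleteSpace E]
  {p : ℂ → E} {ρ : ℝ}

theorem circleAverage_inv_pow_smul_eq_coeff {P : FormalMultilinearSeries ℂ ℂ E} (hρ : 0 < ρ)
    (hp : DifferentiableOn ℂ p (closedBall 0 ρ)) (hP : HasFPowerSeriesAt p P 0) (n : ℕ) :
    circleAverage (fun z ↦ z⁻¹ ^ n • p z) 0 ρ = P.coeff n := by
  have hcauchy : HasFPowerSeriesAt p (cauchyPowerSeries p 0 ρ) 0 :=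
    (hp.hasFPowerSeriesOnBall (R := ⟨ρ, hρ.le⟩) hρ).hasFPowerSeriesAt
  rw [hP.eq_formalMultilinearSeries hcauchy, coeff, show (1 : Fin n → ℂ) = fun _ ↦ 1 from rfl,
    cauchyPowerSeries_apply, circleAverage_eq_circleIntegral hρ.ne']
  simp_rw [sub_zero, one_div, smul_comm _ (_ ^ n)]

theorem circleAverage_pow_smul_eq_zero (hρ : 0 ≤ ρ) (hp : DifferentiableOn ℂ p (closedBall 0 ρ))
    {n : ℕ} (hn : n ≠ 0) : circleAverage (fun z ↦ z ^ n • p z) 0 ρ = 0 := by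
  have hcl : DiffContOnCl ℂ (fun z ↦ z ^ n • p z) (ball 0 |ρ|) :=
    ((differentiableOn_pow n).smul hp).diffContOnCl_ball (by rw [abs_of_nonneg hρ])
  rw [hcl.circleAverage, zero_pow hn, zero_smul]

variable {g : ℂ → ℂ}

theorem circleAverage_re_eq_re_zero (hρ : 0 ≤ ρ) (hg : DifferentiableOn ℂ g (closedBall 0 ρ)) :
    circleAverage (fun z ↦ (g z).re) 0 ρ = (g 0).re := by
  have hint : CircleIntegrable g 0 ρ :=
    hg.continuousOn.mono sphere_subset_closedBall |>.circleIntegrable hρ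
  have hcl : DiffContOnCl ℂ g (ball 0 |ρ|) := hg.diffContOnCl_ball (by rw [abs_of_nonneg hρ])
  rw [← hcl.circleAverage]
  exact reCLM.circleAverage_comp_comm hint

theorem circleAverage_inv_pow_mul_conj_eq_zero (hρ : 0 ≤ ρ)
    (hg : DifferentiableOn ℂ g (closedBall 0 ρ)) {n : ℕ} (hn : n ≠ 0) :
    circleAverage (fun z ↦ z⁻¹ ^ n * conj (g z)) 0 ρ = 0 := by
  have hsphere : Set.EqOn (fun z ↦ z⁻¹ ^ n * conj (g z))
      (fun z ↦ ((ρ ^ 2)⁻¹ ^ n : ℝ) • conj (z ^ n • g z)) (sphere 0 |ρ|) := by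
    intro z hz
    rw [mem_sphere_zero_iff_norm] at hz
    have hinv : z⁻¹ = ((ρ ^ 2)⁻¹ : ℝ) * conj z := by
      rw [inv_def, normSq_eq_norm_sq, hz, sq_abs, mul_comm]
    simp only [hinv, real_smul, smul_eq_mul, map_mul, map_pow, ofReal_pow, mul_pow]
    ring
  have hint : CircleIntegrable (fun z ↦ z ^ n • g z) 0 ρ :=
    ((differentiableOn_pow n).smul hg).continuousOn.mono sphere_subset_closedBall
      |>.circleIntegrable hρ
  rw [circleAverage_congr_sphere hsphere, circleAverage_fun_smul,
    show (fun z ↦ conj (z ^ n • g z)) = conjCLE.toContinuousLinearMap ∘ (fun z ↦ z ^ n • g z)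
      from rfl, ContinuousLinearMap.circleAverage_comp_comm _ hint,
    circleAverage_pow_smul_eq_zero hρ hg hn, map_zero, smul_zero]

end CircleAverage

section Caratheodory

variable {g : ℂ → ℂ} {P : FormalMultilinearSeries ℂ ℂ ℂ} {β : ℝ} {n : ℕ}

theorem circleAverage_inv_pow_mul_re_eq_coeff {ρ : ℝ} (hρ : 0 < ρ)
    (hg : DifferentiableOn ℂ g (closedBall 0 ρ)) (hP : HasFPowerSeriesAt g P 0) (hn : n ≠ 0) :
    circleAverage (fun z ↦ z⁻¹ ^ n * ((2 * ((g z).re - β) : ℝ) : ℂ)) 0 ρ = P.coeff n := by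
  have hint : ∀ {h : ℂ → ℂ}, ContinuousOn h (closedBall 0 ρ) →
      CircleIntegrable (fun z ↦ z⁻¹ ^ n * h z) 0 ρ := fun hh ↦
    ContinuousOn.circleIntegrable hρ.le <|
      ((continuousOn_inv₀.mono fun _ hz ↦ ne_of_mem_sphere hz hρ.ne').pow n).mul
        (hh.mono sphere_subset_closedBall)
  -- `2 (Re g - β) = g + conj g - 2β`, and only `g` has a nonzero `n`-th Fourier mode.
  have hweight : Set.EqOn (fun z ↦ z⁻¹ ^ n * ((2 * ((g z).re - β) : ℝ) : ℂ))
      (fun z ↦ z⁻¹ ^ n • g z + z⁻¹ ^ n * conj (g z) - (2 * β : ℂ) • (z⁻¹ ^ n * conj 1))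
      (sphere 0 |ρ|) := fun z _ ↦ by
    simp only [map_one, mul_one, smul_eq_mul]
    rw [← mul_add, add_conj]
    push_cast
    ring
  have h₁ := hint hg.continuousOn
  have h₂ := hint (continuous_conj.comp_continuousOn hg.continuousOn)
  have h₃ := hint (h := fun _ ↦ conj 1) continuousOn_const
  rw [circleAverage_congr_sphere hweight, circleAverage_fun_sub, circleAverage_fun_add,
    circleAverage_fun_smul, circleAverage_inv_pow_smul_eq_coeff hρ hg hP,
    circleAverage_inv_pow_mul_conj_eq_zero hρ.le hg hn,
    circleAverage_inv_pow_mul_conj_eq_zero (g := fun _ ↦ 1) hρ.le (differentiableOn_const 1) hn]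
  · simp
  exacts [h₁, h₂, h₁.add h₂, h₃.const_smul]

theorem norm_coeff_le_of_le_re_on_sphere {ρ : ℝ} (hρ : 0 < ρ)
    (hg : DifferentiableOn ℂ g (closedBall 0 ρ)) (hP : HasFPowerSeriesAt g P 0)
    (hre : ∀ z ∈ sphere 0 ρ, β ≤ (g z).re) (hn : n ≠ 0) :
    ‖P.coeff n‖ ≤ 2 * ((g 0).re - β) / ρ ^ n := by
  calc ‖P.coeff n‖ = ‖circleAverage (fun z ↦ z⁻¹ ^ n * ((2 * ((g z).re - β) : ℝ) : ℂ)) 0 ρ‖ := by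
        rw [circleAverage_inv_pow_mul_re_eq_coeff hρ hg hP hn]
    _ ≤ circleAverage (fun z ↦ ‖z⁻¹ ^ n * ((2 * ((g z).re - β) : ℝ) : ℂ)‖) 0 ρ :=
        norm_circleAverage_le _ _ _
    _ = circleAverage (fun z ↦ (((2 / ρ ^ n : ℝ) : ℂ) * (g z - β)).re) 0 ρ := by
        refine circleAverage_congr_sphere fun z hz ↦ ?_
        rw [abs_of_pos hρ] at hz
        have hβz := hre z hz
        rw [mem_sphere_zero_iff_norm] at hz
        simp only [norm_mul, norm_pow, norm_inv, hz, norm_real,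
          Real.norm_of_nonneg (by linarith : 0 ≤ 2 * ((g z).re - β)), re_ofReal_mul, sub_re,
          ofReal_re]
        ring
    _ = 2 * ((g 0).re - β) / ρ ^ n := by
        rw [circleAverage_re_eq_re_zero hρ.le ((hg.sub_const _).const_mul _), re_ofReal_mul, sub_re,
          ofReal_re]
        ring

theorem norm_coeff_le_of_le_re (hg : DifferentiableOn ℂ g (ball 0 1))
    (hP : HasFPowerSeriesAt g P 0) (hre : ∀ z ∈ ball 0 1, β ≤ (g z).re) (hn : n ≠ 0) :
    ‖P.coeff n‖ ≤ 2 * ((g 0).re - β) := by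
  have hlim : Tendsto (fun ρ : ℝ ↦ 2 * ((g 0).re - β) / ρ ^ n) (𝓝[<] 1)
      (𝓝 (2 * ((g 0).re - β))) := by
    have hcont : ContinuousAt (fun ρ : ℝ ↦ 2 * ((g 0).re - β) / ρ ^ n) 1 :=
      continuousAt_const.div (continuousAt_id.pow n) (by norm_num)
    simpa using hcont.tendsto.mono_left nhdsWithin_le_nhds
  refine ge_of_tendsto hlim ?_
  filter_upwards [Ioo_mem_nhdsLT one_pos] with ρ ⟨hρ, hρ1⟩
  have hsub : closedBall (0 : ℂ) ρ ⊆ ball 0 1 := closedBall_subset_ball hρ1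
  exact norm_coeff_le_of_le_re_on_sphere hρ (hg.mono hsub) hP
    (fun z hz ↦ hre z (hsub (sphere_subset_closedBall hz))) hn

end Caratheodory

section PowerSeries

variable {𝕜 : Type*} [RCLike 𝕜] {f g : 𝕜 → 𝕜} {a b : ℕ → 𝕜}

theorem HasFPowerSeriesAt.mul_ofScalars (hf : HasFPowerSeriesAt f (ofScalars 𝕜 a) 0)
    (hg : HasFPowerSeriesAt g (ofScalars 𝕜 b) 0) :
    HasFPowerSeriesAt (fun z ↦ f z * g z)
      (ofScalars 𝕜 fun n ↦ ∑ k ∈ range (n + 1), a k * b (n - k)) 0 := by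
  rw [hasFPowerSeriesAt_iff] at *
  filter_upwards [hf, hg] with z hfz hgz
  simp only [coeff_ofScalars, zero_add, smul_eq_mul] at *
  have hprod := hasSum_sum_range_mul_of_summable_norm hfz.summable.norm hgz.summable.norm
  rw [hfz.tsum_eq, hgz.tsum_eq] at hprod
  refine hprod.congr_fun fun n ↦ ?_
  rw [mul_sum]
  refine sum_congr rfl fun k hk ↦ ?_
  rw [← pow_mul_pow_sub z (Nat.le_of_lt_succ (mem_range.1 hk))]
  ring

theorem HasFPowerSeriesAt.mul_deriv_ofScalars (hf : HasFPowerSeriesAt f (ofScalars 𝕜 a) 0) :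
    HasFPowerSeriesAt (fun z ↦ z * deriv f z) (ofScalars 𝕜 fun n ↦ n * a n) 0 := by
  obtain ⟨r, hr⟩ := hf
  have hderiv := ((ContinuousLinearMap.apply 𝕜 𝕜 1).comp_hasFPowerSeriesOnBall
    hr.fderiv).hasFPowerSeriesAt
  have hcoeff : ∀ n, ((ContinuousLinearMap.apply 𝕜 𝕜 (1 : 𝕜)).compFormalMultilinearSeries
      (ofScalars 𝕜 a).derivSeries).coeff n = (n + 1) * a (n + 1) := fun n ↦ by
    change (ofScalars 𝕜 a).derivSeries.coeff n 1 = _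
    rw [derivSeries_coeff_one, coeff_ofScalars, nsmul_eq_mul]
    push_cast
    ring
  rw [hasFPowerSeriesAt_iff] at hderiv ⊢
  filter_upwards [hderiv] with z hz
  simp only [zero_add, hcoeff, smul_eq_mul] at hz
  refine (hasSum_nat_add_iff' 1).1 ?_
  simp only [coeff_ofScalars, smul_eq_mul, sum_range_one, Nat.cast_zero, zero_mul, mul_zero,
    sub_zero, zero_add]
  refine (hz.mul_left z).congr_fun fun n ↦ ?_
  push_cast
  ring

theorem natCast_mul_eq_sum_of_mul_deriv_eq {H : 𝕜 → 𝕜} {c : ℕ → 𝕜}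
    (hf : HasFPowerSeriesAt f (ofScalars 𝕜 a) 0) (hH : HasFPowerSeriesAt H (ofScalars 𝕜 c) 0)
    (h : (fun z ↦ z * deriv f z) =ᶠ[𝓝 0] fun z ↦ H z * f z) (n : ℕ) :
    n * a n = ∑ k ∈ range (n + 1), c k * a (n - k) :=
  congrFun (ofScalars_series_injective 𝕜 𝕜
    ((hf.mul_deriv_ofScalars.congr h).eq_formalMultilinearSeries (hH.mul_ofScalars hf))) n

end PowerSeries

theorem hankel_eq_of_natCast_mul_eq_sum {K : Type*} [Field K] [CharZero K] {a c : ℕ → K}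
    (ha0 : a 0 = 0) (ha1 : a 1 = 1) (h : ∀ n : ℕ, n * a n = ∑ k ∈ range (n + 1), c k * a (n - k)) :
    a 2 * a 4 - a 3 ^ 2 = c 1 * c 3 / 3 - c 2 ^ 2 / 4 - c 1 ^ 4 / 12 := by
  have h1 := h 1
  have h2 := h 2
  have h3 := h 3
  have h4 := h 4
  norm_num [sum_range_succ, ha0, ha1] at h1 h2 h3 h4
  rw [← h1] at h2 h3 h4
  have ha2 : a 2 = c 1 := by linear_combination h2
  have ha3 : a 3 = (c 2 + c 1 ^ 2) / 2 := by linear_combination h3 / 2 + c 1 / 2 * ha2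
  have ha4 : a 4 = (2 * c 3 + 3 * c 1 * c 2 + c 1 ^ 3) / 6 := by
    linear_combination h4 / 3 + c 1 / 3 * ha3 + c 2 / 3 * ha2
  rw [ha2, ha3, ha4]
  ring

theorem norm_hankel_expr_le {𝕜 : Type*} [RCLike 𝕜] {c₁ c₂ c₃ : 𝕜} {t : ℝ} (h₁ : ‖c₁‖ ≤ t)
    (h₂ : ‖c₂‖ ≤ t) (h₃ : ‖c₃‖ ≤ t) :
    ‖c₁ * c₃ / 3 - c₂ ^ 2 / 4 - c₁ ^ 4 / 12‖ ≤ t ^ 2 / 3 + t ^ 2 / 4 + t ^ 4 / 12 := by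
  have ht : 0 ≤ t := (norm_nonneg _).trans h₁
  calc ‖c₁ * c₃ / 3 - c₂ ^ 2 / 4 - c₁ ^ 4 / 12‖
      ≤ ‖c₁ * c₃ / 3‖ + ‖c₂ ^ 2 / 4‖ + ‖c₁ ^ 4 / 12‖ :=
        (norm_sub_le _ _).trans (add_le_add_left (norm_sub_le _ _) _)
    _ = ‖c₁‖ * ‖c₃‖ / 3 + ‖c₂‖ ^ 2 / 4 + ‖c₁‖ ^ 4 / 12 := by simp
    _ ≤ t * t / 3 + t ^ 2 / 4 + t ^ 4 / 12 := by gcongr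
    _ = t ^ 2 / 3 + t ^ 2 / 4 + t ^ 4 / 12 := by ring

theorem eq_smul_dslope_of_eq_zero {𝕜 E : Type*} [NontriviallyNormedField 𝕜] [NormedAddCommGroup E]
    [NormedSpace 𝕜 E] {f : 𝕜 → E} (hf0 : f 0 = 0) (z : 𝕜) : f z = z • dslope f 0 z := by
  simpa [hf0] using (sub_smul_dslope f 0 z).symm

theorem dslope_ne_zero_of_injOn {𝕜 E : Type*} [NontriviallyNormedField 𝕜] [NormedAddCommGroup E]
    [NormedSpace 𝕜 E] {f : 𝕜 → E} {s : Set 𝕜} {z : 𝕜} (hf0 : f 0 = 0) (hf'0 : deriv f 0 ≠ 0)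
    (hinj : Set.InjOn f s) (h0 : 0 ∈ s) (hz : z ∈ s) : dslope f 0 z ≠ 0 := by
  rcases eq_or_ne z 0 with rfl | hz0
  · rwa [dslope_same]
  · intro h
    exact hz0 (hinj hz h0 (by rw [eq_smul_dslope_of_eq_zero hf0 z, h, smul_zero, hf0]))

section Starlike

variable {f : ℂ → ℂ} {β : ℝ}

theorem exists_mul_deriv_eq_mul_of_starlike (hdf : DifferentiableOn ℂ f (ball 0 1))
    (hf0 : f 0 = 0) (hf'0 : deriv f 0 = 1) (hinj : Set.InjOn f (ball 0 1)) (hβ : β ≤ 1)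
    (hre : ∀ z ∈ ball (0 : ℂ) 1, z ≠ 0 → β ≤ (z * deriv f z / f z).re) :
    ∃ H : ℂ → ℂ, DifferentiableOn ℂ H (ball 0 1) ∧ H 0 = 1 ∧ (∀ z ∈ ball 0 1, β ≤ (H z).re) ∧
      (fun z ↦ z * deriv f z) =ᶠ[𝓝 0] fun z ↦ H z * f z := by
  have hu : ∀ z ∈ ball (0 : ℂ) 1, dslope f 0 z ≠ 0 := fun z hz ↦
    dslope_ne_zero_of_injOn hf0 (by simp [hf'0]) hinj (mem_ball_self one_pos) hz
  refine ⟨fun z ↦ deriv f z / dslope f 0 z, (hdf.deriv isOpen_ball).div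
    ((differentiableOn_dslope (ball_mem_nhds 0 one_pos)).2 hdf) hu, by simp [hf'0], ?_, ?_⟩
  · intro z hz
    rcases eq_or_ne z 0 with rfl | hz0
    · simpa [hf'0] using hβ
    · convert hre z hz hz0 using 2
      rw [eq_smul_dslope_of_eq_zero hf0 z, smul_eq_mul, mul_div_mul_left _ _ hz0]
  · filter_upwards [ball_mem_nhds (0 : ℂ) one_pos] with z hz
    rw [eq_smul_dslope_of_eq_zero hf0 z, smul_eq_mul]
    field_simp [hu z hz]

theorem exists_coeff_recurrence_of_starlike {a : ℕ → ℂ}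
    (hfa : HasFPowerSeriesAt f (ofScalars ℂ a) 0) (ha0 : a 0 = 0) (ha1 : a 1 = 1)
    (hdf : DifferentiableOn ℂ f (ball 0 1)) (hinj : Set.InjOn f (ball 0 1)) (hβ : β ≤ 1)
    (hre : ∀ z ∈ ball (0 : ℂ) 1, z ≠ 0 → β ≤ (z * deriv f z / f z).re) :
    ∃ c : ℕ → ℂ, (∀ n, n ≠ 0 → ‖c n‖ ≤ 2 * (1 - β)) ∧
      ∀ n : ℕ, n * a n = ∑ k ∈ range (n + 1), c k * a (n - k) := by
  have hf0 : f 0 = 0 := by simpa [ha0] using (hfa.coeff_zero fun _ ↦ 1).symm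
  have hf'0 : deriv f 0 = 1 := by simpa [ha1] using hfa.deriv
  obtain ⟨H, hH, hH0, hHre, hrel⟩ := exists_mul_deriv_eq_mul_of_starlike hdf hf0 hf'0 hinj hβ hre
  have hc := (hH.analyticAt (ball_mem_nhds 0 one_pos)).hasFPowerSeriesAt
  refine ⟨_, fun n hn ↦ ?_, natCast_mul_eq_sum_of_mul_deriv_eq hfa hc hrel⟩
  simpa [hH0] using norm_coeff_le_of_le_re hH hc hHre hn

end Starlike

theorem second_hankel_bound_bistarlike_general
    (β : ℝ) (hβ : β ≤ 1 - (3 + Real.sqrt 89) / 16)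
    (f : ℂ → ℂ) (a : ℕ → ℂ) (ha0 : a 0 = 0) (ha1 : a 1 = 1)
    (hf : ∀ z ∈ Metric.ball (0 : ℂ) 1, HasSum (fun n : ℕ => a n * z ^ n) (f z))
    (hf_an : AnalyticOn ℂ f (Metric.ball (0 : ℂ) 1))
    (hf_inj : Set.InjOn f (Metric.ball (0 : ℂ) 1))
    (hRef : ∀ z ∈ Metric.ball (0 : ℂ) 1, z ≠ 0 →
      β ≤ (z * deriv f z / f z).re) :
    ‖a 2 * a 4 - (a 3) ^ 2‖ ≤
      4 * (1 - β) ^ 2 * (4 * (1 - β) ^ 2 + 1) / 3 := by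
  have hfa : HasFPowerSeriesAt f (ofScalars ℂ a) 0 := by
    rw [hasFPowerSeriesAt_iff]
    filter_upwards [ball_mem_nhds (0 : ℂ) one_pos] with z hz
    simpa [mul_comm] using hf z hz
  have hsqrt : 5 ≤ √89 := Real.le_sqrt_of_sq_le (by norm_num)
  have ht : 1 ≤ 2 * (1 - β) := by linarith
  obtain ⟨c, hc, hrec⟩ := exists_coeff_recurrence_of_starlike hfa ha0 ha1
    hf_an.differentiableOn hf_inj (by linarith) hRef
  rw [hankel_eq_of_natCast_mul_eq_sum ha0 ha1 hrec]
  calc _ ≤ (2 * (1 - β)) ^ 2 / 3 + (2 * (1 - β)) ^ 2 / 4 + (2 * (1 - β)) ^ 4 / 12 :=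
        norm_hankel_expr_le (hc 1 one_ne_zero) (hc 2 two_ne_zero) (hc 3 three_ne_zero)
    _ ≤ _ := by
        have ht2 : 1 ≤ (2 * (1 - β)) ^ 2 := one_le_pow₀ ht
        nlinarith [mul_nonneg (sub_nonneg.2 ht2) (sq_nonneg (2 * (1 - β)))]

/-- Second Hankel determinant bound for bi-starlike functions of order `β`
(case `α = 0`). -/
theorem second_hankel_bound_bistarlike
    (β : ℝ) (hβ0 : 0 ≤ β) (hβ : β ≤ 1 - (3 + Real.sqrt 89) / 16)
    (f g : ℂ → ℂ) (a : ℕ → ℂ) (ha0 : a 0 = 0) (ha1 : a 1 = 1)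
    (hf : ∀ z ∈ Metric.ball (0 : ℂ) 1, HasSum (fun n : ℕ => a n * z ^ n) (f z))
    (hf_an : AnalyticOn ℂ f (Metric.ball (0 : ℂ) 1))
    (hf_inj : Set.InjOn f (Metric.ball (0 : ℂ) 1))
    (r : ℝ) (hr : 0 < r)
    (hg_an : AnalyticOn ℂ g (Metric.ball (0 : ℂ) r))
    (hg_inj : Set.InjOn g (Metric.ball (0 : ℂ) r))
    (hgf : ∀ z ∈ Metric.ball (0 : ℂ) 1, g (f z) = z)
    (hRef : ∀ z ∈ Metric.ball (0 : ℂ) 1, z ≠ 0 →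
      β ≤ (z * deriv f z / f z).re)
    (hReg : ∀ w ∈ Metric.ball (0 : ℂ) r, w ≠ 0 →
      β ≤ (w * deriv g w / g w).re) :
    ‖a 2 * a 4 - (a 3) ^ 2‖ ≤
      4 * (1 - β) ^ 2 * (4 * (1 - β) ^ 2 + 1) / 3 :=
  second_hankel_bound_bistarlike_general β hβ f a ha0 ha1 hf hf_an hf_inj hRef
end
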